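/- Let m ≥ 1 be a natural number and 0 ≤ δ < 1. Define P(z) = (1 − δ/4)z² + (1 − δ/8)z + 1 and P̃(z) = P(z)^{2m} · T_m( (P(z) + P(z)⁻¹) / (2 cos((2/3)δ)) ), where T_m is the degree-m Chebyshev polynomial of the first kind. Then P̃(1) is a real number and satisfies P̃(1) ≥ exp(mδ/12) · |P̃(z)| for every z in the half annulus D_δ = { z ∈ ℂ : δ ≤ |z| ≤ 1 and Re(z) ≤ 0 }. (One checks that P does not vanish on D_δ ∪ {1}, so P(z)⁻¹ is the genuine inverse throughout.) -/

import Mathlib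

/-! On the closed left half of the unit disk the quadratic `P` has modulus at most `1`: its squared
modulus is `1` plus two nonpositive terms. There, with `c = cos (2δ/3) ≥ 7/9`, the crude bound
`‖T_m w‖ ≤ (2‖w‖ + 1)^m` gives `‖P̃ z‖ ≤ (1 + 2/c)^m ≤ (25/7)^m`. At `z = 1` the value
`P 1 = 3 - 3δ/8 ≥ 21/8` is real, and `T_m x ≥ x^m` for `x ≥ 1` gives `P̃ 1 ≥ (P(1)³/2)^m ≥ 9^m`,
which beats `(exp (δ/12) · 25/7)^m`. -/

/-- The quadratic `P(z) = (1 − δ/4)z² + (1 − δ/8)z + 1`. -/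
noncomputable def Pquad (δ : ℝ) (z : ℂ) : ℂ :=
  (1 - (δ : ℂ) / 4) * z ^ 2 + (1 - (δ : ℂ) / 8) * z + 1

/-- The Remez-type polynomial for the half annulus:
`P̃(z) = P(z)^{2m} · T_m((P(z) + P(z)⁻¹)/(2 cos((2/3)δ)))`. -/
noncomputable def Ptilde (m : ℕ) (δ : ℝ) (z : ℂ) : ℂ :=
  (Pquad δ z) ^ (2 * m) * (Polynomial.Chebyshev.T ℂ m).eval
    ((Pquad δ z + (Pquad δ z)⁻¹) / (2 * (Real.cos (2 / 3 * δ) : ℂ)))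

open Polynomial Polynomial.Chebyshev

theorem Real.cosh_pow_le_cosh_nat_mul (θ : ℝ) (n : ℕ) :
    Real.cosh θ ^ n ≤ Real.cosh (n * θ) := by
  induction n with
  | zero => simp
  | succ n ih =>
    have hsinh : 0 ≤ Real.sinh (n * θ) * Real.sinh θ := by
      rcases le_total 0 θ with hθ | hθ
      · exact mul_nonneg (sinh_nonneg_iff.2 (by positivity)) (sinh_nonneg_iff.2 hθ)
      · exact mul_nonneg_of_nonpos_of_nonpos
          (sinh_nonpos_iff.2 (mul_nonpos_of_nonneg_of_nonpos n.cast_nonneg hθ))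
          (sinh_nonpos_iff.2 hθ)
    calc Real.cosh θ ^ (n + 1) = Real.cosh θ ^ n * Real.cosh θ := pow_succ _ _
      _ ≤ Real.cosh (n * θ) * Real.cosh θ := by gcongr
      _ ≤ Real.cosh ((n + 1 : ℕ) * θ) := by
        rw [Nat.cast_succ, add_one_mul, Real.cosh_add]; linarith

theorem Polynomial.Chebyshev.pow_le_eval_T_real (n : ℕ) {x : ℝ} (hx : 1 ≤ x) :
    x ^ n ≤ (T ℝ n).eval x := by
  rw [← Real.cosh_arcosh hx, T_real_cosh]
  exact_mod_cast Real.cosh_pow_le_cosh_nat_mul _ n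

theorem Polynomial.Chebyshev.norm_eval_T_le {R : Type*} [NormedCommRing R] [NormOneClass R]
    (w : R) : ∀ n : ℕ, ‖(T R n).eval w‖ ≤ (2 * ‖w‖ + 1) ^ n
  | 0 => by simp
  | 1 => by simp; linarith [norm_nonneg w]
  | n + 2 => by
    have ih₀ := norm_eval_T_le w n
    have ih₁ := norm_eval_T_le w (n + 1)
    push_cast at ih₁ ⊢
    have h2 : ‖(2 : R)‖ ≤ 2 := by simpa [one_add_one_eq_two] using norm_add_le (1 : R) 1
    have hpow : (2 * ‖w‖ + 1) ^ n ≤ (2 * ‖w‖ + 1) ^ (n + 1) :=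
      pow_le_pow_right₀ (by linarith [norm_nonneg w]) n.le_succ
    rw [T_add_two]
    simp only [eval_sub, eval_mul, eval_X, eval_ofNat]
    calc ‖2 * w * (T R (n + 1)).eval w - (T R n).eval w‖
        ≤ ‖(2 : R)‖ * ‖w‖ * ‖(T R (n + 1)).eval w‖ + ‖(T R n).eval w‖ :=
          (norm_sub_le _ _).trans (by gcongr; exact norm_mul₃_le)
      _ ≤ 2 * ‖w‖ * (2 * ‖w‖ + 1) ^ (n + 1) + (2 * ‖w‖ + 1) ^ (n + 1) := by
          gcongr; exact ih₀.trans hpow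
      _ = (2 * ‖w‖ + 1) ^ (n + 2) := by ring

theorem Complex.normSq_quadratic (a b : ℝ) (z : ℂ) :
    normSq (a * z ^ 2 + b * z + 1) = 1 + normSq z * (a ^ 2 * normSq z + b ^ 2 - 2 * a)
      + 2 * z.re * (2 * a * z.re + b * (a * normSq z + 1)) := by
  simp only [normSq_apply, pow_two, add_re, add_im, mul_re, mul_im, ofReal_re, ofReal_im,
    one_re, one_im]
  ring

theorem Complex.norm_quadratic_le_one {a b : ℝ} (ha : 0 < a) (hb : 0 < b)
    (hab : a ^ 2 + b ^ 2 ≤ 2 * a) (hab' : a ≤ b ^ 2) {z : ℂ} (hz : ‖z‖ ≤ 1) (hre : z.re ≤ 0) :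
    ‖(a : ℂ) * z ^ 2 + b * z + 1‖ ≤ 1 := by
  have hs : normSq z ≤ 1 := by rw [← Complex.sq_norm]; exact pow_le_one₀ (norm_nonneg z) hz
  have hradial : normSq z * (a ^ 2 * normSq z + b ^ 2 - 2 * a) ≤ 0 :=
    mul_nonpos_of_nonneg_of_nonpos (normSq_nonneg z) (by nlinarith)
  -- `a b (a b x² + 2 a x + b) = (a b x + a)² + a (b² - a)`
  have hdisc : 0 ≤ a * b * z.re ^ 2 + 2 * a * z.re + b := by
    have : 0 ≤ a * b * (a * b * z.re ^ 2 + 2 * a * z.re + b) := by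
      nlinarith [sq_nonneg (a * b * z.re + a), mul_nonneg ha.le (sub_nonneg.2 hab')]
    exact nonneg_of_mul_nonneg_right (by linarith) (mul_pos ha hb)
  have hangular : 2 * z.re * (2 * a * z.re + b * (a * normSq z + 1)) ≤ 0 := by
    refine mul_nonpos_of_nonpos_of_nonneg (by linarith) ?_
    nlinarith [mul_le_mul_of_nonneg_left (re_sq_le_normSq z) (mul_pos ha hb).le]
  rw [← sq_le_one_iff₀ (norm_nonneg _), Complex.sq_norm, normSq_quadratic]
  linarith

theorem norm_Pquad_le_one {δ : ℝ} (hδ0 : 0 ≤ δ) (hδ1 : δ ≤ 1) {z : ℂ} (hz : ‖z‖ ≤ 1)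
    (hre : z.re ≤ 0) : ‖Pquad δ z‖ ≤ 1 := by
  have h := Complex.norm_quadratic_le_one (a := 1 - δ / 4) (b := 1 - δ / 8)
    (by linarith) (by linarith) (by nlinarith) (by nlinarith) hz hre
  simpa [Pquad] using h

theorem Ptilde_one (m : ℕ) (δ : ℝ) :
    Ptilde m δ 1 = (((3 - 3 * δ / 8) ^ (2 * m) * (T ℝ m).eval
      ((3 - 3 * δ / 8 + (3 - 3 * δ / 8)⁻¹) / (2 * Real.cos (2 / 3 * δ))) : ℝ) : ℂ) := by
  have hP : Pquad δ 1 = ((3 - 3 * δ / 8 : ℝ) : ℂ) := by push_cast [Pquad]; ring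
  rw [Ptilde, hP]
  push_cast
  rfl

theorem pow_le_pow_mul_eval_T_real {p c : ℝ} (hp : 0 < p) (hc0 : 0 < c) (hc1 : c ≤ 1) (m : ℕ) :
    (p ^ 3 / 2) ^ m ≤ p ^ (2 * m) * (T ℝ m).eval ((p + p⁻¹) / (2 * c)) := by
  set x := (p + p⁻¹) / (2 * c)
  have hpx : p / 2 ≤ x := by
    rw [le_div_iff₀ (by positivity)]; nlinarith [inv_pos.2 hp]
  have hx : 1 ≤ x := by
    have : p * p⁻¹ = 1 := mul_inv_cancel₀ hp.ne'
    rw [le_div_iff₀ (by positivity)]; nlinarith [sq_nonneg (p - 1), inv_pos.2 hp]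
  calc (p ^ 3 / 2) ^ m = p ^ (2 * m) * (p / 2) ^ m := by ring
    _ ≤ p ^ (2 * m) * x ^ m := by gcongr
    _ ≤ p ^ (2 * m) * (T ℝ m).eval x := by gcongr; exact pow_le_eval_T_real m hx

theorem norm_pow_mul_eval_T_le {p : ℂ} (hp : ‖p‖ ≤ 1) {c : ℝ} (hc : 0 < c) (m : ℕ) :
    ‖p ^ (2 * m) * (T ℂ m).eval ((p + p⁻¹) / (2 * (c : ℂ)))‖ ≤ (1 + 2 / c) ^ m := by
  set w := (p + p⁻¹) / (2 * (c : ℂ))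
  have hw : ‖w‖ = ‖p + p⁻¹‖ / (2 * c) := by
    simp [w, Complex.norm_real, abs_of_pos hc]
  -- `p² (p + p⁻¹) = p³ + p`, also when `p = 0`
  have hp' : ‖p‖ ^ 2 * ‖p + p⁻¹‖ ≤ 2 := by
    have : p ^ 2 * (p + p⁻¹) = p ^ 3 + p := by rw [mul_add, pow_two, mul_self_mul_inv]; ring
    calc ‖p‖ ^ 2 * ‖p + p⁻¹‖ = ‖p ^ 3 + p‖ := by rw [← norm_pow, ← norm_mul, this]
      _ ≤ ‖p‖ ^ 3 + ‖p‖ := by rw [← norm_pow]; exact norm_add_le _ _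
      _ ≤ 2 := by linarith [pow_le_one₀ (n := 3) (norm_nonneg p) hp]
  have hbase : ‖p‖ ^ 2 * (2 * ‖w‖ + 1) ≤ 1 + 2 / c := by
    have : ‖p‖ ^ 2 * (2 * ‖w‖) ≤ 2 / c := by
      rw [hw, show ‖p‖ ^ 2 * (2 * (‖p + p⁻¹‖ / (2 * c))) = ‖p‖ ^ 2 * ‖p + p⁻¹‖ / c by
        field_simp]
      gcongr
    linarith [pow_le_one₀ (n := 2) (norm_nonneg p) hp]
  calc ‖p ^ (2 * m) * (T ℂ m).eval w‖ = (‖p‖ ^ 2) ^ m * ‖(T ℂ m).eval w‖ := by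
        rw [norm_mul, norm_pow, pow_mul]
    _ ≤ (‖p‖ ^ 2) ^ m * (2 * ‖w‖ + 1) ^ m := by gcongr; exact norm_eval_T_le w m
    _ ≤ (1 + 2 / c) ^ m := by rw [← mul_pow]; gcongr

theorem halfannulus_remez_general (m : ℕ) (δ : ℝ) (hδ0 : 0 ≤ δ) (hδ1 : δ < 1) :
    (Ptilde m δ 1).im = 0 ∧
      ∀ z : ℂ, δ ≤ ‖z‖ → ‖z‖ ≤ 1 → z.re ≤ 0 →
        Real.exp (m * δ / 12) * ‖Ptilde m δ z‖ ≤ (Ptilde m δ 1).re := by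
  set c := Real.cos (2 / 3 * δ)
  have hc : 7 / 9 ≤ c := by nlinarith [Real.one_sub_sq_div_two_le_cos (x := 2 / 3 * δ)]
  have hexp : Real.exp (δ / 12) ≤ 12 / 11 := by
    have := Real.exp_bound_div_one_sub_of_interval (x := δ / 12) (by positivity) (by linarith)
    exact this.trans (by rw [div_le_div_iff₀] <;> linarith)
  have hratio : Real.exp (δ / 12) * (1 + 2 / c) ≤ (3 - 3 * δ / 8) ^ 3 / 2 := by
    have : 1 + 2 / c ≤ 25 / 7 := by
      have : 2 / c ≤ 18 / 7 := by rw [div_le_iff₀ (by linarith)]; linarith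
      linarith
    calc Real.exp (δ / 12) * (1 + 2 / c) ≤ 12 / 11 * (25 / 7) :=
          mul_le_mul hexp this (by positivity) (by norm_num)
      _ ≤ (21 / 8) ^ 3 / 2 := by norm_num
      _ ≤ (3 - 3 * δ / 8) ^ 3 / 2 := by gcongr; linarith
  rw [Ptilde_one]
  refine ⟨Complex.ofReal_im _, fun z _ hz hre => ?_⟩
  calc Real.exp (m * δ / 12) * ‖Ptilde m δ z‖
      ≤ Real.exp (δ / 12) ^ m * (1 + 2 / c) ^ m := by
        rw [← Real.exp_nat_mul, mul_div_assoc]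
        gcongr
        exact norm_pow_mul_eval_T_le (norm_Pquad_le_one hδ0 hδ1.le hz hre) (by linarith) m
    _ ≤ ((3 - 3 * δ / 8) ^ 3 / 2) ^ m := by rw [← mul_pow]; gcongr
    _ ≤ _ := pow_le_pow_mul_eval_T_real (by linarith) (by linarith) (Real.cos_le_one _) m

/-- For `m ≥ 1` and `0 ≤ δ < 1`, `P̃(1)` is real and
`P̃(1) ≥ exp(mδ/12)·|P̃(z)|` for every `z` in the half annulus
`D_δ = {z : δ ≤ |z| ≤ 1, Re z ≤ 0}`. -/
theorem halfannulus_remez (m : ℕ) (hm : 1 ≤ m) (δ : ℝ) (hδ0 : 0 ≤ δ) (hδ1 : δ < 1) :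
    (Ptilde m δ 1).im = 0 ∧
      ∀ z : ℂ, δ ≤ ‖z‖ → ‖z‖ ≤ 1 → z.re ≤ 0 →
        Real.exp (m * δ / 12) * ‖Ptilde m δ z‖ ≤ (Ptilde m δ 1).re :=
  halfannulus_remez_general m δ hδ0 hδ1
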